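/- arXiv:2203.09552 — 3 statements merged into one kernel-verified Lean document; each statement's English description precedes it below -/
import Mathlib

section
/- The backbone infinity distance d_{B∞} satisfies the triangle inequality: for backbones x, y, z, d_{B∞}(x, z) ≤ d_{B∞}(x, y) + d_{B∞}(y, z). -/
open Set

noncomputable section

/-- A node of a backbone: a label (string) together with a weight. -/
abbrev BNode := String × ℝ

/-- A backbone: a finite sequence of labeled, weighted nodes. -/
abbrev Backbone := List BNode

/-- All weights of a backbone are nonnegative. -/
def IsBackbone (x : Backbone) : Prop := ∀ p ∈ x, 0 ≤ p.2

/-- Weight of an optional node; the empty node `𝟘` (i.e. `none`) has weight 0. -/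
def optW : Option BNode → ℝ
  | none => 0
  | some a => a.2

/-- An alignment between backbones `x` and `y`, encoded as a list of pairs of
optional indices (`none` = the empty node `𝟘`): no `(𝟘,𝟘)` pairs, each index of
`x` and of `y` occurs exactly once and in increasing order (partial
monotonicity), and matched nodes carry equal labels. -/
def IsAlignment (x y : Backbone)
    (a : List (Option (Fin x.length) × Option (Fin y.length))) : Prop :=
  (∀ p ∈ a, ¬(p.1 = none ∧ p.2 = none)) ∧
  a.filterMap Prod.fst = List.finRange x.length ∧
  a.filterMap Prod.snd = List.finRange y.length ∧
  ∀ p ∈ a, ∀ (i : Fin x.length) (j : Fin y.length),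
    p.1 = some i → p.2 = some j → (x.get i).1 = (y.get j).1

/-- Cost contribution of one aligned pair: `|w_x − w_y|`, where the empty node
has weight 0 (so an insertion `(x,𝟘)` costs `w_x`). -/
def pairCost (x y : Backbone)
    (p : Option (Fin x.length) × Option (Fin y.length)) : ℝ :=
  |optW (p.1.map x.get) - optW (p.2.map y.get)|

/-- Total (L¹) cost of an alignment. -/
def alignCost (x y : Backbone)
    (a : List (Option (Fin x.length) × Option (Fin y.length))) : ℝ :=
  (a.map (pairCost x y)).sum

/-- Max (L∞) cost of an alignment. -/
def alignCostInf (x y : Backbone)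
    (a : List (Option (Fin x.length) × Option (Fin y.length))) : ℝ :=
  (a.map (pairCost x y)).foldr max 0

/-- The backbone distance: infimum of the L¹ cost over all alignments. -/
def dB (x y : Backbone) : ℝ :=
  sInf {c | ∃ a, IsAlignment x y a ∧ c = alignCost x y a}

/-- The backbone infinity distance: infimum of the L∞ cost over all alignments. -/
def dBInf (x y : Backbone) : ℝ :=
  sInf {c | ∃ a, IsAlignment x y a ∧ c = alignCostInf x y a}

/-! ### Auxiliary machinery: value-level alignments -/

/-- Map an index-level alignment pair to the pair of (optional) nodes it aligns. -/
def toVals (x z : Backbone) (p : Option (Fin x.length) × Option (Fin z.length)) :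
    Option BNode × Option BNode :=
  (p.1.map x.get, p.2.map z.get)

/-- Cost of a value-level pair. -/
def vPairCost (p : Option BNode × Option BNode) : ℝ := |optW p.1 - optW p.2|

/-- L∞ cost of a value-level alignment. -/
def vCost (l : List (Option BNode × Option BNode)) : ℝ :=
  (l.map vPairCost).foldr max 0

/-- A value-level alignment between `x` and `z`. -/
def IsVA (x z : Backbone) (l : List (Option BNode × Option BNode)) : Prop :=
  (∀ p ∈ l, ¬(p.1 = none ∧ p.2 = none)) ∧
  l.filterMap Prod.fst = x ∧
  l.filterMap Prod.snd = z ∧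
  ∀ p ∈ l, ∀ u v : BNode, p.1 = some u → p.2 = some v → u.1 = v.1

lemma vCost_cons (p : Option BNode × Option BNode) (l : List (Option BNode × Option BNode)) :
    vCost (p :: l) = max (vPairCost p) (vCost l) := rfl

lemma vCost_nonneg (l : List (Option BNode × Option BNode)) : 0 ≤ vCost l := by
  induction l with
  | nil => exact le_refl 0
  | cons p t ih => rw [vCost_cons]; exact le_trans ih (le_max_right _ _)

lemma cost_eq (x z : Backbone) (a : List (Option (Fin x.length) × Option (Fin z.length))) :
    alignCostInf x z a = vCost (a.map (toVals x z)) := by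
  simp only [alignCostInf, vCost, List.map_map]
  rfl

lemma lift_filterMap_fst {n k m j : ℕ} (f : Fin n → Fin k) (g : Fin m → Fin j)
    (a : List (Option (Fin n) × Option (Fin m))) :
    (a.map (fun q => (q.1.map f, q.2.map g))).filterMap Prod.fst =
      (a.filterMap Prod.fst).map f := by
  rw [List.filterMap_map, List.map_filterMap]
  rfl

lemma lift_filterMap_snd {n k m j : ℕ} (f : Fin n → Fin k) (g : Fin m → Fin j)
    (a : List (Option (Fin n) × Option (Fin m))) :
    (a.map (fun q => (q.1.map f, q.2.map g))).filterMap Prod.snd =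
      (a.filterMap Prod.snd).map g := by
  rw [List.filterMap_map, List.map_filterMap]
  rfl

lemma vals_filterMap_fst (x z : Backbone)
    (a : List (Option (Fin x.length) × Option (Fin z.length))) :
    (a.map (toVals x z)).filterMap Prod.fst = (a.filterMap Prod.fst).map x.get := by
  rw [List.filterMap_map, List.map_filterMap]
  rfl

lemma vals_filterMap_snd (x z : Backbone)
    (a : List (Option (Fin x.length) × Option (Fin z.length))) :
    (a.map (toVals x z)).filterMap Prod.snd = (a.filterMap Prod.snd).map z.get := by
  rw [List.filterMap_map, List.map_filterMap]
  rfl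

/-- Step A: an index-level alignment yields a value-level alignment. -/
lemma stepA {x y : Backbone} {a : List (Option (Fin x.length) × Option (Fin y.length))}
    (h : IsAlignment x y a) : IsVA x y (a.map (toVals x y)) := by
  obtain ⟨h0, h1, h2, h3⟩ := h
  refine ⟨?_, ?_, ?_, ?_⟩
  · intro p hp
    obtain ⟨q, hq, rfl⟩ := List.mem_map.1 hp
    have := h0 q hq
    simpa [toVals, Option.map_eq_none_iff] using this
  · rw [vals_filterMap_fst, h1, List.map_get_finRange]
  · rw [vals_filterMap_snd, h2, List.map_get_finRange]
  · intro p hp u v hu hv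
    obtain ⟨q, hq, rfl⟩ := List.mem_map.1 hp
    simp only [toVals] at hu hv
    obtain ⟨i, hi, rfl⟩ := Option.map_eq_some_iff.1 hu
    obtain ⟨j, hj, rfl⟩ := Option.map_eq_some_iff.1 hv
    exact h3 q hq i j hi hj

/-- Step B: any value-level alignment is realized by an index-level alignment. -/
lemma stepB : ∀ (l : List (Option BNode × Option BNode)) (x z : Backbone), IsVA x z l →
    ∃ a, IsAlignment x z a ∧ a.map (toVals x z) = l := by
  intro l
  induction l with
  | nil =>
    intro x z h
    obtain ⟨_, h1, h2, _⟩ := h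
    simp only [List.filterMap_nil] at h1 h2
    subst h1; subst h2
    exact ⟨[], ⟨by simp, by simp, by simp, by simp⟩, rfl⟩
  | cons p t ih =>
    intro x z h
    obtain ⟨h0, h1, h2, h3⟩ := h
    obtain ⟨o1, o2⟩ := p
    have htva : ∀ x' z', t.filterMap Prod.fst = x' → t.filterMap Prod.snd = z' →
        IsVA x' z' t := by
      intro x' z' e1 e2
      exact ⟨fun q hq => h0 q (List.mem_cons_of_mem _ hq), e1, e2,
        fun q hq => h3 q (List.mem_cons_of_mem _ hq)⟩
    cases o1 with
    | some u =>
      cases o2 with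
      | some v =>
        simp only [List.filterMap_cons] at h1 h2
        subst h1; subst h2
        obtain ⟨a, ha, hmap⟩ := ih _ _ (htva _ _ rfl rfl)
        obtain ⟨ha0, ha1, ha2, ha3⟩ := ha
        refine ⟨(some ⟨0, Nat.succ_pos _⟩, some ⟨0, Nat.succ_pos _⟩) ::
          a.map (fun q => (q.1.map Fin.succ, q.2.map Fin.succ)), ⟨?_, ?_, ?_, ?_⟩, ?_⟩
        · intro q hq
          rcases List.mem_cons.1 hq with rfl | hq
          · simp
          · obtain ⟨r, hr, rfl⟩ := List.mem_map.1 hq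
            have := ha0 r hr
            simpa [Option.map_eq_none_iff] using this
        · simp only [List.filterMap_cons]
          rw [lift_filterMap_fst, ha1]
          simp only [List.length_cons, List.finRange_succ, Fin.mk_zero]
        · simp only [List.filterMap_cons]
          rw [lift_filterMap_snd, ha2]
          simp only [List.length_cons, List.finRange_succ, Fin.mk_zero]
        · intro q hq i j hi hj
          rcases List.mem_cons.1 hq with rfl | hq
          · simp only at hi hj
            cases hi; cases hj
            exact h3 (some u, some v) List.mem_cons_self u v rfl rfl
          · obtain ⟨r, hr, rfl⟩ := List.mem_map.1 hq
            simp only at hi hj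
            obtain ⟨i', hi', rfl⟩ := Option.map_eq_some_iff.1 hi
            obtain ⟨j', hj', rfl⟩ := Option.map_eq_some_iff.1 hj
            exact ha3 r hr i' j' hi' hj'
        · simp only [List.map_cons, List.map_map]
          congr 1
          have hq : ∀ q ∈ a,
              ((toVals (u :: t.filterMap Prod.fst) (v :: t.filterMap Prod.snd)) ∘
                (fun q => (q.1.map Fin.succ, q.2.map Fin.succ))) q =
              toVals (t.filterMap Prod.fst) (t.filterMap Prod.snd) q := by
            rintro ⟨_ | i, _ | j⟩ _ <;> rfl
          rw [List.map_congr_left hq]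
          exact hmap
      | none =>
        simp only [List.filterMap_cons] at h1 h2
        subst h1; subst h2
        obtain ⟨a, ha, hmap⟩ := ih _ _ (htva _ _ rfl rfl)
        obtain ⟨ha0, ha1, ha2, ha3⟩ := ha
        refine ⟨(some ⟨0, Nat.succ_pos _⟩, none) ::
          a.map (fun q => (q.1.map Fin.succ, q.2.map id)), ⟨?_, ?_, ?_, ?_⟩, ?_⟩
        · intro q hq
          rcases List.mem_cons.1 hq with rfl | hq
          · simp
          · obtain ⟨r, hr, rfl⟩ := List.mem_map.1 hq
            have := ha0 r hr
            simpa [Option.map_eq_none_iff] using this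
        · simp only [List.filterMap_cons]
          rw [lift_filterMap_fst, ha1]
          simp only [List.length_cons, List.finRange_succ, Fin.mk_zero]
        · simp only [List.filterMap_cons]
          rw [lift_filterMap_snd, ha2, List.map_id]
        · intro q hq i j hi hj
          rcases List.mem_cons.1 hq with rfl | hq
          · simp at hj
          · obtain ⟨r, hr, rfl⟩ := List.mem_map.1 hq
            simp only at hi hj
            obtain ⟨i', hi', rfl⟩ := Option.map_eq_some_iff.1 hi
            obtain ⟨j', hj', rfl⟩ := Option.map_eq_some_iff.1 hj
            exact ha3 r hr i' j' hi' hj'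
        · simp only [List.map_cons, List.map_map]
          congr 1
          have hq : ∀ q ∈ a,
              ((toVals (u :: t.filterMap Prod.fst) (t.filterMap Prod.snd)) ∘
                (fun q => (q.1.map Fin.succ, q.2.map id))) q =
              toVals (t.filterMap Prod.fst) (t.filterMap Prod.snd) q := by
            rintro ⟨_ | i, _ | j⟩ _ <;> rfl
          rw [List.map_congr_left hq]
          exact hmap
    | none =>
      cases o2 with
      | some v =>
        simp only [List.filterMap_cons] at h1 h2
        subst h1; subst h2
        obtain ⟨a, ha, hmap⟩ := ih _ _ (htva _ _ rfl rfl)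
        obtain ⟨ha0, ha1, ha2, ha3⟩ := ha
        refine ⟨(none, some ⟨0, Nat.succ_pos _⟩) ::
          a.map (fun q => (q.1.map id, q.2.map Fin.succ)), ⟨?_, ?_, ?_, ?_⟩, ?_⟩
        · intro q hq
          rcases List.mem_cons.1 hq with rfl | hq
          · simp
          · obtain ⟨r, hr, rfl⟩ := List.mem_map.1 hq
            have := ha0 r hr
            simpa [Option.map_eq_none_iff] using this
        · simp only [List.filterMap_cons]
          rw [lift_filterMap_fst, ha1, List.map_id]
        · simp only [List.filterMap_cons]
          rw [lift_filterMap_snd, ha2]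
          simp only [List.length_cons, List.finRange_succ, Fin.mk_zero]
        · intro q hq i j hi hj
          rcases List.mem_cons.1 hq with rfl | hq
          · simp at hi
          · obtain ⟨r, hr, rfl⟩ := List.mem_map.1 hq
            simp only at hi hj
            obtain ⟨i', hi', rfl⟩ := Option.map_eq_some_iff.1 hi
            obtain ⟨j', hj', rfl⟩ := Option.map_eq_some_iff.1 hj
            exact ha3 r hr i' j' hi' hj'
        · simp only [List.map_cons, List.map_map]
          congr 1
          have hq : ∀ q ∈ a,
              ((toVals (t.filterMap Prod.fst) (v :: t.filterMap Prod.snd)) ∘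
                (fun q => (q.1.map id, q.2.map Fin.succ))) q =
              toVals (t.filterMap Prod.fst) (t.filterMap Prod.snd) q := by
            rintro ⟨_ | i, _ | j⟩ _ <;> rfl
          rw [List.map_congr_left hq]
          exact hmap
      | none =>
        exact absurd ⟨rfl, rfl⟩ (h0 (none, none) List.mem_cons_self)

/-! Constructors for value-level alignments. -/

lemma IsVA_cons_ss {x z : Backbone} {l} (u v : BNode) (huv : u.1 = v.1) (h : IsVA x z l) :
    IsVA (u :: x) (v :: z) ((some u, some v) :: l) := by
  obtain ⟨h0, h1, h2, h3⟩ := h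
  refine ⟨?_, ?_, ?_, ?_⟩
  · intro p hp
    rcases List.mem_cons.1 hp with rfl | hp
    · simp
    · exact h0 p hp
  · simp [List.filterMap_cons, h1]
  · simp [List.filterMap_cons, h2]
  · intro p hp a b ha hb
    rcases List.mem_cons.1 hp with rfl | hp
    · simp only at ha hb; cases ha; cases hb; exact huv
    · exact h3 p hp a b ha hb

lemma IsVA_cons_sn {x z : Backbone} {l} (u : BNode) (h : IsVA x z l) :
    IsVA (u :: x) z ((some u, none) :: l) := by
  obtain ⟨h0, h1, h2, h3⟩ := h
  refine ⟨?_, ?_, ?_, ?_⟩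
  · intro p hp
    rcases List.mem_cons.1 hp with rfl | hp
    · simp
    · exact h0 p hp
  · simp [List.filterMap_cons, h1]
  · simp [List.filterMap_cons, h2]
  · intro p hp a b ha hb
    rcases List.mem_cons.1 hp with rfl | hp
    · simp at hb
    · exact h3 p hp a b ha hb

lemma IsVA_cons_ns {x z : Backbone} {l} (v : BNode) (h : IsVA x z l) :
    IsVA x (v :: z) ((none, some v) :: l) := by
  obtain ⟨h0, h1, h2, h3⟩ := h
  refine ⟨?_, ?_, ?_, ?_⟩
  · intro p hp
    rcases List.mem_cons.1 hp with rfl | hp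
    · simp
    · exact h0 p hp
  · simp [List.filterMap_cons, h1]
  · simp [List.filterMap_cons, h2]
  · intro p hp a b ha hb
    rcases List.mem_cons.1 hp with rfl | hp
    · simp at ha
    · exact h3 p hp a b ha hb

/-- Step C: composition of value-level alignments, with L∞ cost subadditivity. -/
lemma compV : ∀ (n : ℕ) (l1 l2 : List (Option BNode × Option BNode)) (x y z : Backbone),
    l1.length + l2.length ≤ n → IsVA x y l1 → IsVA y z l2 →
    ∃ l, IsVA x z l ∧ vCost l ≤ vCost l1 + vCost l2 := by
  intro n
  induction n with
  | zero =>
    intro l1 l2 x y z hn h1 h2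
    have e1 : l1 = [] := List.length_eq_zero_iff.1 (by omega)
    have e2 : l2 = [] := List.length_eq_zero_iff.1 (by omega)
    subst e1; subst e2
    obtain ⟨_, g1, g2, _⟩ := h1
    obtain ⟨_, f1, f2, _⟩ := h2
    simp only [List.filterMap_nil] at g1 g2 f1 f2
    subst g1; subst f2
    exact ⟨[], ⟨by simp, by simp, by simp, by simp⟩, by simp [vCost]⟩
  | succ n ih =>
    intro l1 l2 x y z hn h1 h2
    cases l1 with
    | nil =>
      obtain ⟨_, g1, g2, _⟩ := h1
      simp only [List.filterMap_nil] at g1 g2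
      subst g1; subst g2
      refine ⟨l2, h2, ?_⟩
      have h0 : vCost ([] : List (Option BNode × Option BNode)) = 0 := rfl
      linarith [vCost_nonneg l2]
    | cons p t1 =>
      cases l2 with
      | nil =>
        obtain ⟨_, f1, f2, _⟩ := h2
        simp only [List.filterMap_nil] at f1 f2
        subst f1; subst f2
        refine ⟨p :: t1, h1, ?_⟩
        have h0 : vCost ([] : List (Option BNode × Option BNode)) = 0 := rfl
        linarith [vCost_nonneg (p :: t1)]
      | cons q t2 =>
        obtain ⟨o1, ov1⟩ := p
        obtain ⟨ov2, o3⟩ := q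
        cases ov2 with
        | none =>
          -- q = (none, some w): w is inserted into z; keep it inserted.
          obtain ⟨w, rfl⟩ : ∃ w, o3 = some w := by
            cases o3 with
            | none => exact absurd ⟨rfl, rfl⟩ (h2.1 (none, none) List.mem_cons_self)
            | some w => exact ⟨w, rfl⟩
          obtain ⟨f0, f1, f2, f3⟩ := h2
          simp only [List.filterMap_cons] at f1 f2
          subst f2
          have h2' : IsVA y (t2.filterMap Prod.snd) t2 :=
            ⟨fun q hq => f0 q (List.mem_cons_of_mem _ hq), f1, rfl,
              fun q hq => f3 q (List.mem_cons_of_mem _ hq)⟩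
          obtain ⟨l, hl, hc⟩ := ih ((o1, ov1) :: t1) t2 x y _
            (by simp only [List.length_cons] at hn ⊢; omega) h1 h2'
          refine ⟨(none, some w) :: l, IsVA_cons_ns w hl, ?_⟩
          have hh := vCost_cons (none, some w) t2
          rw [vCost_cons]
          apply max_le
          · have := le_max_left (vPairCost (none, some w)) (vCost t2)
            linarith [vCost_nonneg ((o1, ov1) :: t1)]
          · have := le_max_right (vPairCost (none, some w)) (vCost t2)
            linarith
        | some v' =>
          cases ov1 with
          | none =>
            -- p = (some u, none): u is inserted into x; keep it inserted.
            obtain ⟨u, rfl⟩ : ∃ u, o1 = some u := by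
              cases o1 with
              | none => exact absurd ⟨rfl, rfl⟩ (h1.1 (none, none) List.mem_cons_self)
              | some u => exact ⟨u, rfl⟩
            obtain ⟨g0, g1, g2, g3⟩ := h1
            simp only [List.filterMap_cons] at g1 g2
            subst g1
            have h1' : IsVA (t1.filterMap Prod.fst) y t1 :=
              ⟨fun q hq => g0 q (List.mem_cons_of_mem _ hq), rfl, g2,
                fun q hq => g3 q (List.mem_cons_of_mem _ hq)⟩
            obtain ⟨l, hl, hc⟩ := ih t1 ((some v', o3) :: t2) _ y z
              (by simp only [List.length_cons] at hn ⊢; omega) h1' h2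
            refine ⟨(some u, none) :: l, IsVA_cons_sn u hl, ?_⟩
            have hh := vCost_cons (some u, none) t1
            rw [vCost_cons]
            apply max_le
            · have := le_max_left (vPairCost (some u, none)) (vCost t1)
              linarith [vCost_nonneg ((some v', o3) :: t2)]
            · have := le_max_right (vPairCost (some u, none)) (vCost t1)
              linarith
          | some v =>
            -- p = (o1, some v), q = (some v', o3): heads of y coincide, so v = v'.
            obtain ⟨g0, g1, g2, g3⟩ := h1
            obtain ⟨f0, f1, f2, f3⟩ := h2
            simp only [List.filterMap_cons] at g2 f1
            rw [← g2] at f1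
            injection f1 with hv hyy
            subst hv
            have hlen' : t1.length + t2.length ≤ n := by
              simp only [List.length_cons] at hn; omega
            have habs : ∀ a c : Option BNode,
                vPairCost (a, c) ≤ vPairCost (a, some v') + vPairCost (some v', c) := by
              intro a c
              simpa [vPairCost, optW] using abs_sub_le (optW a) v'.2 (optW c)
            have hc1 : vPairCost (o1, some v') ≤ vCost ((o1, some v') :: t1) := by
              rw [vCost_cons]; exact le_max_left _ _
            have hc2 : vPairCost (some v', o3) ≤ vCost ((some v', o3) :: t2) := by
              rw [vCost_cons]; exact le_max_left _ _
            have ht1 : vCost t1 ≤ vCost ((o1, some v') :: t1) := by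
              rw [vCost_cons]; exact le_max_right _ _
            have ht2 : vCost t2 ≤ vCost ((some v', o3) :: t2) := by
              rw [vCost_cons]; exact le_max_right _ _
            have h1' : IsVA (t1.filterMap Prod.fst) (t1.filterMap Prod.snd) t1 :=
              ⟨fun q hq => g0 q (List.mem_cons_of_mem _ hq), rfl, rfl,
                fun q hq => g3 q (List.mem_cons_of_mem _ hq)⟩
            have h2' : IsVA (t1.filterMap Prod.snd) (t2.filterMap Prod.snd) t2 :=
              ⟨fun q hq => f0 q (List.mem_cons_of_mem _ hq), hyy, rfl,
                fun q hq => f3 q (List.mem_cons_of_mem _ hq)⟩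
            obtain ⟨l, hl, hc⟩ := ih t1 t2 _ _ _ hlen' h1' h2'
            cases o1 with
            | some u =>
              simp only [List.filterMap_cons] at g1
              subst g1
              cases o3 with
              | some w =>
                simp only [List.filterMap_cons] at f2
                subst f2
                have hlab : u.1 = w.1 := by
                  rw [g3 (some u, some v') List.mem_cons_self u v' rfl rfl]
                  exact f3 (some v', some w) List.mem_cons_self v' w rfl rfl
                refine ⟨(some u, some w) :: l, IsVA_cons_ss u w hlab hl, ?_⟩
                rw [vCost_cons]
                apply max_le
                · linarith [habs (some u) (some w)]
                · linarith
              | none =>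
                simp only [List.filterMap_cons] at f2
                subst f2
                refine ⟨(some u, none) :: l, IsVA_cons_sn u hl, ?_⟩
                rw [vCost_cons]
                apply max_le
                · linarith [habs (some u) none]
                · linarith
            | none =>
              simp only [List.filterMap_cons] at g1
              subst g1
              cases o3 with
              | some w =>
                simp only [List.filterMap_cons] at f2
                subst f2
                refine ⟨(none, some w) :: l, IsVA_cons_ns w hl, ?_⟩
                rw [vCost_cons]
                apply max_le
                · linarith [habs none (some w)]
                · linarith
              | none =>
                simp only [List.filterMap_cons] at f2
                subst f2
                exact ⟨l, hl, by linarith⟩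

/-- The trivial value-level alignment (everything inserted). -/
lemma trivVA (x z : Backbone) :
    IsVA x z (x.map (fun p => (some p, none)) ++ z.map (fun q => (none, some q))) := by
  refine ⟨?_, ?_, ?_, ?_⟩
  · intro p hp
    rcases List.mem_append.1 hp with hp | hp <;>
      obtain ⟨a, _, rfl⟩ := List.mem_map.1 hp <;> simp
  · simp [List.filterMap_append, List.filterMap_map, Function.comp_def]
  · simp [List.filterMap_append, List.filterMap_map, Function.comp_def]
  · intro p hp u v hu hv
    rcases List.mem_append.1 hp with hp | hp <;>
      obtain ⟨a, _, rfl⟩ := List.mem_map.1 hp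
    · simp at hv
    · simp at hu

lemma costSet_nonempty (x z : Backbone) :
    {c | ∃ a, IsAlignment x z a ∧ c = alignCostInf x z a}.Nonempty := by
  obtain ⟨a, ha, _⟩ := stepB _ x z (trivVA x z)
  exact ⟨alignCostInf x z a, a, ha, rfl⟩

lemma costSet_bdd (x z : Backbone) :
    BddBelow {c | ∃ a, IsAlignment x z a ∧ c = alignCostInf x z a} := by
  refine ⟨0, fun c hc => ?_⟩
  obtain ⟨a, _, rfl⟩ := hc
  rw [cost_eq]
  exact vCost_nonneg _

/-- The backbone infinity distance satisfies the triangle inequality. -/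
theorem backbone_infinity_triangle (x y z : Backbone)
    (hx : IsBackbone x) (hy : IsBackbone y) (hz : IsBackbone z) :
    dBInf x z ≤ dBInf x y + dBInf y z := by
  have key : ∀ c1 ∈ {c | ∃ a, IsAlignment x y a ∧ c = alignCostInf x y a},
      ∀ c2 ∈ {c | ∃ a, IsAlignment y z a ∧ c = alignCostInf y z a},
      dBInf x z ≤ c1 + c2 := by
    rintro c1 ⟨a1, ha1, rfl⟩ c2 ⟨a2, ha2, rfl⟩
    have v1 := stepA ha1
    have v2 := stepA ha2
    obtain ⟨l, hl, hc⟩ := compV ((a1.map (toVals x y)).length + (a2.map (toVals y z)).length)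
      (a1.map (toVals x y)) (a2.map (toVals y z)) x y z le_rfl v1 v2
    obtain ⟨a, ha, hmap⟩ := stepB l x z hl
    have hmem : alignCostInf x z a ∈ {c | ∃ a, IsAlignment x z a ∧ c = alignCostInf x z a} :=
      ⟨a, ha, rfl⟩
    calc dBInf x z ≤ alignCostInf x z a := csInf_le (costSet_bdd x z) hmem
      _ = vCost l := by rw [cost_eq, hmap]
      _ ≤ _ := by rw [cost_eq x y a1, cost_eq y z a2]; exact hc
  have h1 : ∀ c1 ∈ {c | ∃ a, IsAlignment x y a ∧ c = alignCostInf x y a},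
      dBInf x z - dBInf y z ≤ c1 := by
    intro c1 hc1
    have : dBInf x z - c1 ≤ dBInf y z := by
      apply le_csInf (costSet_nonempty y z)
      intro c2 hc2
      have := key c1 hc1 c2 hc2
      linarith
    linarith
  have h2 : dBInf x z - dBInf y z ≤ dBInf x y := le_csInf (costSet_nonempty x y) h1
  linarith
end
end

section
/- Let f, f' : C → ℝ be nicely tame with ‖f − f'‖_∞ < δ_f/2 (f' extremely close to f). Let (t, f(t)) be a local minimum of f with persistence point p = (f(t), ζ_f(t)) ∈ D(f) \ Δ, and let q = (f'(t'), ζ_{f'}(t')) ∈ D(f') lie in the open L∞-box of radius ε := ‖f − f'‖_∞ centered at p. Then ½·pers_{f'}(t') > ε. -/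
open Set

noncomputable section
open Classical

def IsLocalMinPt (C : Set ℝ) (f : ℝ → ℝ) (t : ℝ) : Prop :=
  t ∈ C ∧ ∃ ε > 0, ∀ y ∈ C, y ≠ t → |y - t| < ε → f t < f y

def IsLocalMaxPt (C : Set ℝ) (f : ℝ → ℝ) (t : ℝ) : Prop :=
  t ∈ C ∧ ∃ ε > 0, ∀ y ∈ C, y ≠ t → |y - t| < ε → f y < f t

def IsExtremumPt (C : Set ℝ) (f : ℝ → ℝ) (t : ℝ) : Prop :=
  IsLocalMinPt C f t ∨ IsLocalMaxPt C f t

/-- Nicely tame: continuous, finitely many local extrema, and finite preimages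
of critical values. -/
def NicelyTame (C : Set ℝ) (f : ℝ → ℝ) : Prop :=
  ContinuousOn f C ∧ {t | IsExtremumPt C f t}.Finite ∧
    ∀ t, IsExtremumPt C f t → {x ∈ C | f x = f t}.Finite

/-- Merge height of a local minimum `t`. -/
def mergeVal (C : Set ℝ) (f : ℝ → ℝ) (t : ℝ) : ℝ :=
  sInf {h : ℝ | ∃ s ∈ connectedComponentIn {x ∈ C | f x ≤ h} t, f s < f t}

/-- Persistence of a local minimum (using `max f − f t` for the essential /
global minimum). -/
def persMin (C : Set ℝ) (f : ℝ → ℝ) (t : ℝ) : ℝ :=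
  if ∀ s ∈ C, f t ≤ f s then sSup (f '' C) - f t else mergeVal C f t - f t

/-- Persistence of a local extremum: for maxima we use the persistence of the
corresponding minimum of `−f`. -/
def persOf (C : Set ℝ) (f : ℝ → ℝ) (t : ℝ) : ℝ :=
  if IsLocalMinPt C f t then persMin C f t else persMin C (fun x => -(f x)) t

/-- Node life: half the persistence of the extremum. -/
def nodeLife (C : Set ℝ) (f : ℝ → ℝ) (t : ℝ) : ℝ := persOf C f t / 2

/-- The (truncated) persistence point of a local extremum (for a maximum, the
point of the diagram of `−f`). -/
def persPoint (C : Set ℝ) (f : ℝ → ℝ) (t : ℝ) : ℝ × ℝ :=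
  if IsLocalMinPt C f t then (f t, f t + persMin C f t)
  else (-(f t), -(f t) + persMin C (fun x => -(f x)) t)

/-- The 0-dimensional sublevel-set persistence diagram of `f`, together with
the diagonal (with infinite multiplicity). -/
def diagramOf (C : Set ℝ) (f : ℝ → ℝ) : Set (ℝ × ℝ) :=
  {q | ∃ t, IsLocalMinPt C f t ∧ q = (f t, f t + persMin C f t)} ∪ {q | q.1 = q.2}

/-- Half the smallest `L∞` distance between two distinct points of a diagram,
at least one of which is off the diagonal. -/
def deltaOf (D : Set (ℝ × ℝ)) : ℝ :=
  (1 / 2) * sInf {d : ℝ | ∃ p ∈ D, p.1 ≠ p.2 ∧ ∃ q ∈ D, q ≠ p ∧ d = dist p q}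

/-- `δ_f = min(δ_min, δ_max)`. -/
def deltaF (C : Set ℝ) (f : ℝ → ℝ) : ℝ :=
  min (deltaOf (diagramOf C f)) (deltaOf (diagramOf C (fun x => -(f x))))

/-- The `L∞` distance between two functions on `C`. -/
def supDist (C : Set ℝ) (f g : ℝ → ℝ) : ℝ :=
  sSup {d : ℝ | ∃ x ∈ C, d = |f x - g x|}

/-- If `f'` is extremely close to `f` and the persistence point `q` of a local
minimum `t'` of `f'` lies in the open `L∞` box of radius `ε = ‖f − f'‖_∞`
centered at an off-diagonal persistence point `p` of a local minimum `t` of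
`f`, then `½·pers_{f'}(t') > ε`. -/
theorem extremely_close_nodeLife_gt (a₁ a₂ : ℝ) (f f' : ℝ → ℝ)
    (hf : NicelyTame (Set.Icc a₁ a₂) f) (hf' : NicelyTame (Set.Icc a₁ a₂) f')
    (ε : ℝ) (hε : ε = supDist (Set.Icc a₁ a₂) f f')
    (hec : ε < deltaF (Set.Icc a₁ a₂) f / 2)
    (t t' : ℝ)
    (ht : IsLocalMinPt (Set.Icc a₁ a₂) f t)
    (ht' : IsLocalMinPt (Set.Icc a₁ a₂) f' t')
    (hoff : 0 < persMin (Set.Icc a₁ a₂) f t)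
    (hq : dist ((f t, f t + persMin (Set.Icc a₁ a₂) f t) : ℝ × ℝ)
            ((f' t', f' t' + persMin (Set.Icc a₁ a₂) f' t') : ℝ × ℝ) < ε) :
    ε < persMin (Set.Icc a₁ a₂) f' t' / 2 := by
  set C := Set.Icc a₁ a₂
  set pm := persMin C f t with hpm
  set pm' := persMin C f' t' with hpm'
  have hεpos : 0 < ε := lt_of_le_of_lt dist_nonneg hq
  rw [Prod.dist_eq, max_lt_iff] at hq
  obtain ⟨h1, h2⟩ := hq
  rw [Real.dist_eq] at h1 h2
  simp only at h1 h2
  -- bound deltaF by pm/4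
  set S := {d : ℝ | ∃ p ∈ diagramOf C f, p.1 ≠ p.2 ∧
      ∃ q ∈ diagramOf C f, q ≠ p ∧ d = dist p q} with hS
  have hpD : ((f t, f t + pm) : ℝ × ℝ) ∈ diagramOf C f := Or.inl ⟨t, ht, rfl⟩
  set m := f t + pm / 2 with hm
  have hqD : ((m, m) : ℝ × ℝ) ∈ diagramOf C f := Or.inr rfl
  have hne : ((m, m) : ℝ × ℝ) ≠ (f t, f t + pm) := by
    intro h
    have h' := congrArg Prod.fst h
    simp only [hm] at h'
    linarith
  have hdist : dist ((f t, f t + pm) : ℝ × ℝ) ((m, m) : ℝ × ℝ) = pm / 2 := by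
    rw [Prod.dist_eq]
    simp only [Real.dist_eq, hm]
    rw [show f t - (f t + pm / 2) = -(pm / 2) by ring,
        show f t + pm - (f t + pm / 2) = pm / 2 by ring,
        abs_neg, abs_of_pos (by linarith), max_self]
  have hmem : pm / 2 ∈ S := by
    refine ⟨(f t, f t + pm), hpD, ?_, (m, m), hqD, hne, hdist.symm⟩
    simp only
    intro h; linarith
  have hbdd : BddBelow S := by
    refine ⟨0, ?_⟩
    rintro d ⟨p, _, _, q, _, _, rfl⟩
    exact dist_nonneg
  have hInf : sInf S ≤ pm / 2 := csInf_le hbdd hmem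
  have hdel : deltaOf (diagramOf C f) ≤ pm / 4 := by
    rw [deltaOf, ← hS]; linarith
  have hdF : deltaF C f ≤ pm / 4 := le_trans (min_le_left _ _) hdel
  have hε8 : ε < pm / 8 := by
    have := hec
    rw [deltaF] at this hdF
    linarith
  -- conclude
  have hb1 : |f t - f' t'| < ε := h1
  have hb2 : |f t + pm - (f' t' + pm')| < ε := h2
  have hb1' := abs_lt.mp hb1
  have hb2' := abs_lt.mp hb2
  linarith
end
end

section
/- In the extremal event supergraph arising from direct alignments of extremely close collections F = {f_i} and F' = {f_i'}, every edge (v(i,k), v(j,m)) satisfies |ω_α(v(i,k), v(j,m)) − ω'_α(v(i,k), v(j,m))| ≤ max(‖f_i − f_i'‖_∞, ‖f_j − f_j'‖_∞), where ω_α and ω'_α are the edge-weight functions induced from the two extremal event DAGs (weight 0 for edges/vertices not present). -/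
open Set

noncomputable section
open Classical

/-- ε-extremal interval at a local minimum. -/
def extMinInterval (C : Set ℝ) (f : ℝ → ℝ) (ε t : ℝ) : Set ℝ :=
  connectedComponentIn {x ∈ C | f x - ε < f t + ε} t

/-- ε-extremal interval at a local maximum. -/
def extMaxInterval (C : Set ℝ) (f : ℝ → ℝ) (ε t : ℝ) : Set ℝ :=
  connectedComponentIn {x ∈ C | f t - ε < f x + ε} t

/-- ε-extremal interval of an extremum of the given type (`true` = minimum). -/
def phiInt (C : Set ℝ) (f : ℝ → ℝ) (isMin : Bool) (ε t : ℝ) : Set ℝ :=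
  if isMin then extMinInterval C f ε t else extMaxInterval C f ε t

/-- `t` is an extremum of `f` of the given type (`true` = minimum). -/
def ExtremumOfType (C : Set ℝ) (f : ℝ → ℝ) (isMin : Bool) (t : ℝ) : Prop :=
  if isMin then IsLocalMinPt C f t else IsLocalMaxPt C f t

/-- Persistence of an extremum of the given type. -/
def persOfType (C : Set ℝ) (f : ℝ → ℝ) (isMin : Bool) (t : ℝ) : ℝ :=
  if isMin then persMin C f t else persMin C (fun x => -(f x)) t

/-- Node life of an extremum of the given type. -/
def nodeLifeOfType (C : Set ℝ) (f : ℝ → ℝ) (isMin : Bool) (t : ℝ) : ℝ :=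
  persOfType C f isMin t / 2

/-- `ε*(t, s)`: the infimum `ε` for which the two ε-extremal intervals
intersect. -/
def epsStar (C : Set ℝ) (f g : ℝ → ℝ) (bf bg : Bool) (t s : ℝ) : ℝ :=
  sInf {ε : ℝ | 0 < ε ∧ (phiInt C f bf ε t ∩ phiInt C g bg ε s).Nonempty}

/-- Bound on differences in edge weights of the extremal event supergraph: each
of the two induced edge weights is either the extremal-event-DAG edge weight
`min(node life, node life, ε*)` (edge present) or `0` (edge absent, in which
case one of its endpoints was aligned with an insertion, forcing the
corresponding node life in the other DAG to be at most the perturbation size).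
Then `|ω_α(e) − ω'_α(e)| ≤ max(‖f_i − f_i'‖_∞, ‖f_j − f_j'‖_∞)`. -/
theorem edge_weight_difference_bound (a₁ a₂ : ℝ) (fi fi' fj fj' : ℝ → ℝ)
    (hfi : NicelyTame (Set.Icc a₁ a₂) fi) (hfi' : NicelyTame (Set.Icc a₁ a₂) fi')
    (hfj : NicelyTame (Set.Icc a₁ a₂) fj) (hfj' : NicelyTame (Set.Icc a₁ a₂) fj')
    (εi εj : ℝ)
    (hεi : εi = supDist (Set.Icc a₁ a₂) fi fi')
    (hεj : εj = supDist (Set.Icc a₁ a₂) fj fj')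
    (heci : εi < deltaF (Set.Icc a₁ a₂) fi / 2)
    (hecj : εj < deltaF (Set.Icc a₁ a₂) fj / 2)
    (bi bj : Bool) (t s t' s' : ℝ)
    (ht : ExtremumOfType (Set.Icc a₁ a₂) fi bi t)
    (hs : ExtremumOfType (Set.Icc a₁ a₂) fj bj s)
    (ht' : ExtremumOfType (Set.Icc a₁ a₂) fi' bi t')
    (hs' : ExtremumOfType (Set.Icc a₁ a₂) fj' bj s')
    -- facts available from the node-weight and ε*-difference lemmas:
    (hnl_i : |nodeLifeOfType (Set.Icc a₁ a₂) fi bi t -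
      nodeLifeOfType (Set.Icc a₁ a₂) fi' bi t'| ≤ εi)
    (hnl_j : |nodeLifeOfType (Set.Icc a₁ a₂) fj bj s -
      nodeLifeOfType (Set.Icc a₁ a₂) fj' bj s'| ≤ εj)
    (hes : |epsStar (Set.Icc a₁ a₂) fi fj bi bj t s -
      epsStar (Set.Icc a₁ a₂) fi' fj' bi bj t' s'| ≤ max εi εj)
    (hnn : 0 ≤ nodeLifeOfType (Set.Icc a₁ a₂) fi bi t ∧
      0 ≤ nodeLifeOfType (Set.Icc a₁ a₂) fj bj s ∧
      0 ≤ nodeLifeOfType (Set.Icc a₁ a₂) fi' bi t' ∧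
      0 ≤ nodeLifeOfType (Set.Icc a₁ a₂) fj' bj s' ∧
      0 ≤ epsStar (Set.Icc a₁ a₂) fi fj bi bj t s ∧
      0 ≤ epsStar (Set.Icc a₁ a₂) fi' fj' bi bj t' s' ∧ 0 ≤ εi ∧ 0 ≤ εj)
    (w w' : ℝ)
    (hw : w = min (min (nodeLifeOfType (Set.Icc a₁ a₂) fi bi t)
        (nodeLifeOfType (Set.Icc a₁ a₂) fj bj s))
        (epsStar (Set.Icc a₁ a₂) fi fj bi bj t s) ∨
      (w = 0 ∧ (nodeLifeOfType (Set.Icc a₁ a₂) fi' bi t' ≤ εi ∨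
        nodeLifeOfType (Set.Icc a₁ a₂) fj' bj s' ≤ εj)))
    (hw' : w' = min (min (nodeLifeOfType (Set.Icc a₁ a₂) fi' bi t')
        (nodeLifeOfType (Set.Icc a₁ a₂) fj' bj s'))
        (epsStar (Set.Icc a₁ a₂) fi' fj' bi bj t' s') ∨
      (w' = 0 ∧ (nodeLifeOfType (Set.Icc a₁ a₂) fi bi t ≤ εi ∨
        nodeLifeOfType (Set.Icc a₁ a₂) fj bj s ≤ εj))) :
    |w - w'| ≤ max εi εj := by
  set A := nodeLifeOfType (Set.Icc a₁ a₂) fi bi t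
  set B := nodeLifeOfType (Set.Icc a₁ a₂) fj bj s
  set A' := nodeLifeOfType (Set.Icc a₁ a₂) fi' bi t'
  set B' := nodeLifeOfType (Set.Icc a₁ a₂) fj' bj s'
  set E := epsStar (Set.Icc a₁ a₂) fi fj bi bj t s
  set E' := epsStar (Set.Icc a₁ a₂) fi' fj' bi bj t' s'
  obtain ⟨hA, hB, hA', hB', hE, hE', hεi0, hεj0⟩ := hnn
  rcases hw with hw | ⟨hw, hcase⟩ <;> rcases hw' with hw' | ⟨hw', hcase'⟩
  · subst hw hw'
    refine (abs_min_sub_min_le_max _ _ _ _).trans (max_le ?_ hes)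
    refine (abs_min_sub_min_le_max _ _ _ _).trans (max_le ?_ ?_)
    · exact le_trans hnl_i (le_max_left _ _)
    · exact le_trans hnl_j (le_max_right _ _)
  · subst hw hw'
    rw [sub_zero, abs_of_nonneg (le_min (le_min hA hB) hE)]
    rcases hcase' with h | h
    · calc min (min A B) E ≤ A := le_trans (min_le_left _ _) (min_le_left _ _)
        _ ≤ εi := h
        _ ≤ max εi εj := le_max_left _ _
    · calc min (min A B) E ≤ B := le_trans (min_le_left _ _) (min_le_right _ _)
        _ ≤ εj := h
        _ ≤ max εi εj := le_max_right _ _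
  · subst hw hw'
    rw [zero_sub, abs_neg, abs_of_nonneg (le_min (le_min hA' hB') hE')]
    rcases hcase with h | h
    · calc min (min A' B') E' ≤ A' := le_trans (min_le_left _ _) (min_le_left _ _)
        _ ≤ εi := h
        _ ≤ max εi εj := le_max_left _ _
    · calc min (min A' B') E' ≤ B' := le_trans (min_le_left _ _) (min_le_right _ _)
        _ ≤ εj := h
        _ ≤ max εi εj := le_max_right _ _
  · subst hw hw'
    simpa using le_max_of_le_left hεi0
end
end
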